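/- For a pure bipartite state |φ⟩ all of whose Schmidt coefficients are ≤ 1/√2 (equivalently, all eigenvalues of the reduced density matrix are ≤ 1/2), M(|φ⟩⟨φ|) equals the entropy of entanglement S_vN(Tr_B |φ⟩⟨φ|). -/

import Mathlib

open Matrix Kronecker Finset
open scoped ComplexOrder

attribute [local instance] Classical.propDecidable

noncomputable section

/-- nearest integer multiple of `y` to `x`, ties broken downward; `0` if `y = 0`. -/
def nim (y x : ℝ) : ℝ :=
  if y = 0 then 0
  else if x - y * ⌊x / y⌋ ≤ y * ⌈x / y⌉ - x then y * ⌊x / y⌋ else y * ⌈x / y⌉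

/-- partial trace over the second (B) factor -/
def ptraceB {α β : Type*} [Fintype α] [Fintype β]
    (ρ : Matrix (α × β) (α × β) ℂ) : Matrix α α ℂ :=
  fun a a' => ∑ b : β, ρ (a, b) (a', b)

/-- partial trace over the first (A) factor -/
def ptraceA {α β : Type*} [Fintype α] [Fintype β]
    (ρ : Matrix (α × β) (α × β) ℂ) : Matrix β β ℂ :=
  fun b b' => ∑ a : α, ρ (a, b) (a, b')

/-- the (real) eigenvalues of a Hermitian matrix, junk value `0` otherwise -/
def evalsR {n : Type*} [Fintype n] [DecidableEq n] (A : Matrix n n ℂ) : n → ℝ :=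
  if h : A.IsHermitian then h.eigenvalues else 0

/-- orthogonal projection onto the η-eigenspace of a Hermitian matrix -/
def eigProj {n : Type*} [Fintype n] [DecidableEq n] (ρ : Matrix n n ℂ) (η : ℝ) :
    Matrix n n ℂ :=
  if h : ρ.IsHermitian then
    ∑ k ∈ univ.filter (fun k => h.eigenvalues k = η),
      vecMulVec (fun i => h.eigenvectorBasis k i) (star fun i => h.eigenvectorBasis k i)
  else 0

/-- truncation of ρ down to the η-eigenspace: `η • P_η` -/
def trunc {n : Type*} [Fintype n] [DecidableEq n] (ρ : Matrix n n ℂ) (η : ℝ) :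
    Matrix n n ℂ := (η : ℂ) • eigProj ρ η

/-- dimension of the η-eigenspace -/
def dimEig {n : Type*} [Fintype n] [DecidableEq n] (ρ : Matrix n n ℂ) (η : ℝ) : ℕ :=
  if h : ρ.IsHermitian then (univ.filter (fun k => h.eigenvalues k = η)).card else 0

/-- a single term of the measure `M` -/
def Mterm (η T lam : ℝ) : ℝ := -(|lam - nim η lam| * Real.logb 2 (lam / T))

/-- the measure `M` seen from side A -/
def MmeasA {α β : Type*} [Fintype α] [Fintype β] [DecidableEq α] [DecidableEq β]
    (ρ : Matrix (α × β) (α × β) ℂ) : ℝ :=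
  ∑ η ∈ Finset.image (evalsR ρ) univ, ∑ i : α,
    Mterm η (η * (dimEig ρ η : ℝ)) (evalsR (ptraceB (trunc ρ η)) i)

/-- the measure `M` seen from side B -/
def MmeasB {α β : Type*} [Fintype α] [Fintype β] [DecidableEq α] [DecidableEq β]
    (ρ : Matrix (α × β) (α × β) ℂ) : ℝ :=
  ∑ η ∈ Finset.image (evalsR ρ) univ, ∑ i : β,
    Mterm η (η * (dimEig ρ η : ℝ)) (evalsR (ptraceA (trunc ρ η)) i)

/-- the measure `M` of nonclassical correlation -/
def Mmeas {α β : Type*} [Fintype α] [Fintype β] [DecidableEq α] [DecidableEq β]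
    (ρ : Matrix (α × β) (α × β) ℂ) : ℝ := (MmeasA ρ + MmeasB ρ) / 2

def IsDensityMatrix {n : Type*} [Fintype n] [DecidableEq n] (ρ : Matrix n n ℂ) : Prop :=
  ρ.PosSemidef ∧ ρ.trace = 1

/-- ρ admits an eigenbasis consisting of product vectors -/
def HasProductEigenbasis {α β : Type*} [Fintype α] [Fintype β] [DecidableEq α] [DecidableEq β]
    (ρ : Matrix (α × β) (α × β) ℂ) : Prop :=
  ∃ (a : α → α → ℂ) (b : β → β → ℂ) (e : α → β → ℝ),
    (∀ j j', ∑ i, star (a j i) * a j' i = if j = j' then 1 else 0) ∧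
    (∀ k k', ∑ i, star (b k i) * b k' i = if k = k' then 1 else 0) ∧
    ρ = ∑ j : α, ∑ k : β,
      (e j k : ℂ) • (vecMulVec (a j) (star (a j)) ⊗ₖ vecMulVec (b k) (star (b k)))


/-- the von Neumann entropy (base-2) of a Hermitian matrix -/
def vonNeumannEntropy {n : Type*} [Fintype n] [DecidableEq n] (A : Matrix n n ℂ) : ℝ :=
  ∑ i, -(evalsR A i * Real.logb 2 (evalsR A i))

/-!
A pure state `ρ = |φ⟩⟨φ|` is a rank-one orthogonal projection: its eigenvalues lie in `{0, 1}` and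
`1` is simple. So in `M` only `η = 1` contributes (for `η = 0` the normalisation is `T = 0` and
`x / 0 = 0`), with `trunc ρ 1 = ρ` and `T = 1`. Writing `φ` as a coefficient matrix `A`, the reduced
states are `A Aᴴ` and `(Aᴴ A)ᵀ`; their characteristic polynomials agree up to a power of `X`, so
they have the same nonzero eigenvalues with multiplicity, and both halves of `M` equal
`∑ Mterm 1 1 cᵢ`. Finally `cᵢ ≤ 1/2` forces `nim 1 cᵢ = 0`, leaving `-cᵢ log₂ cᵢ`.
-/

theorem nim_one_eq_zero {x : ℝ} (h0 : 0 ≤ x) (h2 : x ≤ 1 / 2) : nim 1 x = 0 := by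
  have hfloor : ⌊x⌋ = 0 := Int.floor_eq_zero_iff.2 ⟨h0, by linarith⟩
  rcases h0.eq_or_lt with rfl | hpos
  · simp [nim]
  · have hceil : ⌈x⌉ = 1 := Int.ceil_eq_iff.2 ⟨by norm_num [hpos], by norm_num; linarith⟩
    simp [nim, hfloor, hceil, show x ≤ 1 - x by linarith]

theorem Mterm_zero_zero (x : ℝ) : Mterm 0 0 x = 0 := by
  simp [Mterm]

theorem Mterm_one_one {x : ℝ} (h0 : 0 ≤ x) (h2 : x ≤ 1 / 2) :
    Mterm 1 1 x = -(x * Real.logb 2 x) := by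
  rw [Mterm, nim_one_eq_zero h0 h2, sub_zero, abs_of_nonneg h0, div_one]

theorem evalsR_of_isHermitian {n : Type*} [Fintype n] [DecidableEq n] {A : Matrix n n ℂ}
    (hA : A.IsHermitian) : evalsR A = hA.eigenvalues :=
  dif_pos hA

namespace Matrix.IsHermitian

open Polynomial

variable {m n : Type*} [Fintype m] [Fintype n] [DecidableEq m] [DecidableEq n]

theorem sum_comp_eigenvalues_eq_of_X_pow_mul_charpoly_eq {M : Matrix m m ℂ} {N : Matrix n n ℂ}
    (hM : M.IsHermitian) (hN : N.IsHermitian) {k l : ℕ}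
    (h : X ^ k * M.charpoly = X ^ l * N.charpoly) {f : ℝ → ℝ} (hf : f 0 = 0) :
    ∑ i, f (hM.eigenvalues i) = ∑ j, f (hN.eigenvalues j) := by
  have hroots := congrArg (fun p : ℂ[X] => (p.roots.map (fun z => f z.re)).sum) h
  simpa [roots_mul, ((monic_X_pow _).mul (charpoly_monic _)).ne_zero, roots_X_pow,
    hM.roots_charpoly_eq_eigenvalues, hN.roots_charpoly_eq_eigenvalues, Multiset.map_nsmul,
    Multiset.sum_nsmul, hf] using hroots

theorem eq_sum_smul_vecMulVec {A : Matrix n n ℂ} (hA : A.IsHermitian) :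
    A = ∑ k, (hA.eigenvalues k : ℂ) •
      vecMulVec ⇑(hA.eigenvectorBasis k) (star ⇑(hA.eigenvectorBasis k)) := by
  conv_lhs => rw [hA.spectral_theorem, Unitary.conjStarAlgAut_apply]
  ext i j
  simp [mul_apply, vecMulVec_apply, diagonal_apply, eigenvectorUnitary_apply, sum_apply,
    mul_assoc, mul_left_comm]

theorem eigenvalues_eq_zero_or_one {A : Matrix n n ℂ} (hA : A.IsHermitian)
    (hP : IsIdempotentElem A) (k : n) : hA.eigenvalues k = 0 ∨ hA.eigenvalues k = 1 := by
  set v := ⇑(hA.eigenvectorBasis k)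
  have hv : v ≠ 0 := (WithLp.ofLp_eq_zero 2).ne.2 (hA.eigenvectorBasis.orthonormal.ne_zero k)
  have hAv : A *ᵥ v = (hA.eigenvalues k : ℂ) • v := hA.mulVec_eigenvectorBasis k
  have hsq : ((hA.eigenvalues k : ℂ) * hA.eigenvalues k) • v = (hA.eigenvalues k : ℂ) • v := by
    rw [← smul_smul, ← hAv, ← mulVec_smul, ← hAv, mulVec_mulVec, hP.eq]
  have := smul_left_injective ℂ hv hsq
  norm_cast at this
  exact IsIdempotentElem.iff_eq_zero_or_one.1 this

theorem eigProj_one_eq_self {A : Matrix n n ℂ} (hA : A.IsHermitian) (hP : IsIdempotentElem A) :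
    eigProj A 1 = A := by
  rw [eigProj, dif_pos hA, sum_filter]
  conv_rhs => rw [hA.eq_sum_smul_vecMulVec]
  refine sum_congr rfl fun k _ => ?_
  rcases hA.eigenvalues_eq_zero_or_one hP k with h | h <;> simp [h]

theorem dimEig_one_eq_trace {A : Matrix n n ℂ} (hA : A.IsHermitian) (hP : IsIdempotentElem A) :
    (dimEig A 1 : ℂ) = A.trace := by
  rw [dimEig, dif_pos hA, hA.trace_eq_sum_eigenvalues, card_filter, Nat.cast_sum]
  refine sum_congr rfl fun k _ => ?_
  rcases hA.eigenvalues_eq_zero_or_one hP k with h | h <;> simp [h]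

end Matrix.IsHermitian

section Projection

variable {n : Type*} [Fintype n] [DecidableEq n] {A : Matrix n n ℂ}

theorem sum_image_evalsR_eq_apply_one (hA : A.IsHermitian) (hP : IsIdempotentElem A)
    (htr : A.trace = 1) {F : ℝ → ℝ} (hF : F 0 = 0) :
    ∑ η ∈ image (evalsR A) univ, F η = F 1 := by
  rw [evalsR_of_isHermitian hA]
  refine sum_eq_single_of_mem 1 ?_ fun η hη hne => ?_
  · obtain ⟨k, hk⟩ : ∃ k, hA.eigenvalues k ≠ 0 := by
      by_contra! h
      simp [hA.trace_eq_sum_eigenvalues, h] at htr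
    exact mem_image.2 ⟨k, mem_univ k, (hA.eigenvalues_eq_zero_or_one hP k).resolve_left hk⟩
  · obtain ⟨k, -, rfl⟩ := mem_image.1 hη
    rw [(hA.eigenvalues_eq_zero_or_one hP k).resolve_right hne, hF]

theorem trunc_one_eq_self (hA : A.IsHermitian) (hP : IsIdempotentElem A) : trunc A 1 = A := by
  rw [trunc, hA.eigProj_one_eq_self hP, Complex.ofReal_one, one_smul]

theorem dimEig_one_eq_one (hA : A.IsHermitian) (hP : IsIdempotentElem A) (htr : A.trace = 1) :
    dimEig A 1 = 1 := by
  exact_mod_cast (hA.dimEig_one_eq_trace hP).trans htr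

end Projection

section RankOneProjection

variable {α β : Type*} [Fintype α] [Fintype β] [DecidableEq α] [DecidableEq β]
  {ρ : Matrix (α × β) (α × β) ℂ}

theorem MmeasA_eq_sum_Mterm_one_one (hρ : ρ.IsHermitian) (hP : IsIdempotentElem ρ)
    (htr : ρ.trace = 1) : MmeasA ρ = ∑ i, Mterm 1 1 (evalsR (ptraceB ρ) i) := by
  rw [MmeasA, sum_image_evalsR_eq_apply_one hρ hP htr (by simp [Mterm_zero_zero]),
    trunc_one_eq_self hρ hP, dimEig_one_eq_one hρ hP htr, Nat.cast_one, mul_one]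

theorem MmeasB_eq_sum_Mterm_one_one (hρ : ρ.IsHermitian) (hP : IsIdempotentElem ρ)
    (htr : ρ.trace = 1) : MmeasB ρ = ∑ j, Mterm 1 1 (evalsR (ptraceA ρ) j) := by
  rw [MmeasB, sum_image_evalsR_eq_apply_one hρ hP htr (by simp [Mterm_zero_zero]),
    trunc_one_eq_self hρ hP, dimEig_one_eq_one hρ hP htr, Nat.cast_one, mul_one]

end RankOneProjection

theorem isIdempotentElem_vecMulVec_star {n : Type*} [Fintype n] {φ : n → ℂ}
    (hφ : star φ ⬝ᵥ φ = 1) : IsIdempotentElem (vecMulVec φ (star φ)) := by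
  change _ * _ = _
  rw [vecMulVec_mul_vecMulVec, hφ, one_smul]

section PureState

variable {α β : Type*} [Fintype α] [Fintype β] (φ : α × β → ℂ)

theorem ptraceB_vecMulVec_star :
    ptraceB (vecMulVec φ (star φ)) = of (Function.curry φ) * (of (Function.curry φ))ᴴ := by
  ext a a'
  simp [ptraceB, mul_apply, vecMulVec_apply]

theorem ptraceA_vecMulVec_star :
    ptraceA (vecMulVec φ (star φ)) = ((of (Function.curry φ))ᴴ * of (Function.curry φ))ᵀ := by
  ext b b'
  simp [ptraceA, mul_apply, vecMulVec_apply, mul_comm]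

theorem evalsR_ptraceB_vecMulVec_star_nonneg [DecidableEq α] (i : α) :
    0 ≤ evalsR (ptraceB (vecMulVec φ (star φ))) i := by
  rw [ptraceB_vecMulVec_star, evalsR_of_isHermitian (isHermitian_mul_conjTranspose_self _)]
  exact eigenvalues_self_mul_conjTranspose_nonneg _ i

variable [DecidableEq α] [DecidableEq β]

theorem sum_comp_evalsR_ptraceA_eq_ptraceB {f : ℝ → ℝ} (hf : f 0 = 0) :
    ∑ j, f (evalsR (ptraceA (vecMulVec φ (star φ))) j) =
      ∑ i, f (evalsR (ptraceB (vecMulVec φ (star φ))) i) := by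
  set A := of (Function.curry φ)
  have hB := isHermitian_mul_conjTranspose_self A
  have hA := (isHermitian_conjTranspose_mul_self A).transpose
  rw [ptraceA_vecMulVec_star, ptraceB_vecMulVec_star, evalsR_of_isHermitian hA,
    evalsR_of_isHermitian hB]
  refine hA.sum_comp_eigenvalues_eq_of_X_pow_mul_charpoly_eq hB
    (k := Fintype.card α) (l := Fintype.card β) ?_ hf
  rw [charpoly_transpose]
  exact (charpoly_mul_comm' A Aᴴ).symm

end PureState

/-- for a pure bipartite state all of whose Schmidt coefficients are
`≤ 1/√2` (i.e. all reduced eigenvalues `≤ 1/2`), `M` equals the entropy of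
entanglement. -/
theorem Mmeas_pure_eq_entropy_of_entanglement
    {α β : Type*} [Fintype α] [Fintype β] [DecidableEq α] [DecidableEq β]
    (φ : α × β → ℂ) (hφ : ∑ p, star (φ p) * φ p = 1)
    (hsc : ∀ i, evalsR (ptraceB (vecMulVec φ (star φ))) i ≤ 1 / 2) :
    Mmeas (vecMulVec φ (star φ)) =
      vonNeumannEntropy (ptraceB (vecMulVec φ (star φ))) := by
  have hρ := (posSemidef_vecMulVec_self_star φ).isHermitian
  have hP := isIdempotentElem_vecMulVec_star hφ
  have htr : (vecMulVec φ (star φ)).trace = 1 := by rw [trace_vecMulVec, dotProduct_comm]; exact hφ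
  have hMterm_zero : Mterm 1 1 0 = 0 := by simp [Mterm_one_one]
  rw [Mmeas, MmeasA_eq_sum_Mterm_one_one hρ hP htr, MmeasB_eq_sum_Mterm_one_one hρ hP htr,
    sum_comp_evalsR_ptraceA_eq_ptraceB φ hMterm_zero, add_self_div_two, vonNeumannEntropy]
  exact sum_congr rfl fun i _ =>
    Mterm_one_one (evalsR_ptraceB_vecMulVec_star_nonneg φ i) (hsc i)

end
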